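/- arXiv:2312.11081 — 2 statements merged into one kernel-verified Lean document; each statement's English description precedes it below -/
import Mathlib

section
/- Let P be a row-finite or column-finite infinite matrix over a commutative ring R. Then the Hankel matrix of the zeroth column of the output matrix satisfies H_∞(𝒪₀(P)) = 𝒪(P) · 𝒪(P^T)^T, where 𝒪₀(P)_n = (P^n)_{00} and H_∞(a)_{n,n'} = a_{n+n'}. -/
/-- Row-finite infinite matrices: each row is a finitely supported function. -/
def RFMat (R : Type*) [Zero R] := ℕ → (ℕ →₀ R)

namespace RFMat

variable {R : Type*} [CommRing R]

/-- Matrix product of row-finite matrices: `(P*Q)_{ik} = ∑_j P_{ij} Q_{jk}`. -/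
noncomputable def mul (P Q : RFMat R) : RFMat R :=
  fun i => (P i).sum fun j a => a • Q j

/-- The identity matrix. -/
noncomputable def one : RFMat R := fun i => Finsupp.single i 1

/-- Matrix power `P^n`. -/
noncomputable def pow (P : RFMat R) : ℕ → RFMat R
  | 0 => one
  | n + 1 => mul (pow P n) P

/-- The output matrix `𝒪(P)`, whose `n`-th row is the `0`-th row of `P^n`. -/
noncomputable def out (P : RFMat R) : RFMat R := fun n => pow P n 0

end RFMat

namespace RFMat

variable {R : Type*} [CommRing R]

theorem mul_assoc' (A B C : RFMat R) : mul (mul A B) C = mul A (mul B C) := by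
  funext i
  show ((A i).sum fun j a => a • B j).sum (fun k b => b • C k)
     = (A i).sum fun j a => a • (B j).sum fun k b => b • C k
  rw [Finsupp.sum_sum_index (fun k => zero_smul R (C k))
      (fun k b c => add_smul b c (C k))]
  refine Finsupp.sum_congr fun j _ => ?_
  rw [Finsupp.sum_smul_index (fun k => zero_smul R (C k)), Finsupp.smul_sum]
  exact Finsupp.sum_congr fun k _ => mul_smul _ _ _

theorem mul_one' (A : RFMat R) : mul A one = A := by
  funext i
  show (A i).sum (fun j a => a • Finsupp.single j 1) = A i
  have : (A i).sum (fun j a => a • Finsupp.single j 1)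
      = (A i).sum fun j a => Finsupp.single j a := by
    refine Finsupp.sum_congr fun j _ => ?_
    rw [Finsupp.smul_single, smul_eq_mul, mul_one]
  rw [this, Finsupp.sum_single]

theorem pow_add' (P : RFMat R) (m n : ℕ) :
    pow P (m + n) = mul (pow P m) (pow P n) := by
  induction n with
  | zero => simp [pow, mul_one']
  | succ n ih =>
      show pow P (m + n + 1) = _
      show mul (pow P (m + n)) P = _
      rw [ih, mul_assoc']
      rfl

end RFMat

/-- For a row-finite matrix `P`, the Hankel matrix of the
zeroth column of the output matrix satisfies, entrywise,
`H_∞(𝒪₀(P))_{n,n'} = (P^{n+n'})_{00} = ∑_k 𝒪(P)_{n,k} · 𝒪(P^T)_{n',k}`,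
i.e. `H_∞(𝒪₀(P)) = 𝒪(P)·𝒪(P^T)^T`, where `𝒪(P^T)_{n',k} = (P^{n'})_{k,0}`. -/
theorem hankel_output_factorization {R : Type*} [CommRing R] (P : RFMat R) :
    ∀ n n' : ℕ,
      RFMat.pow P (n + n') 0 0
        = (RFMat.out P n).sum fun k c => c * RFMat.pow P n' k 0 := by
  intro n n'
  rw [RFMat.pow_add']
  show ((RFMat.pow P n 0).sum fun k c => c • RFMat.pow P n' k) 0 = _
  rw [Finsupp.sum_apply]
  exact Finsupp.sum_congr fun k _ => by
    rw [Finsupp.smul_apply, smul_eq_mul]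
end

section
/- In the ring ℚ[a,z,x] (with a = (a_n), z = (z_n) sequences of indeterminates and x an indeterminate), the exponential AZ matrix satisfies the conjugation identity B_x^{-1} · EAZ(a,z) · B_x = EAZ(a, z + x·a), where EAZ(a,z)_{nk} = (n!/k!)·(z_{n-k} + k·a_{n-k+1}) and B_x is the x-binomial matrix (B_x)_{ij} = C(i,j) x^{i-j}. -/
/-- The polynomial ring `ℚ[a, z, x]` in the indeterminates
`a = (a_n)_{n≥0}`, `z = (z_n)_{n≥0}` and `x`. -/
abbrev RAZ : Type := MvPolynomial ((ℕ ⊕ ℕ) ⊕ Unit) ℚ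

/-- The indeterminate `a_n`, extended by `a_m = 0` for `m < 0`. -/
noncomputable def aInd (m : ℤ) : RAZ :=
  if 0 ≤ m then MvPolynomial.X (Sum.inl (Sum.inl m.toNat)) else 0

/-- The indeterminate `z_n`, extended by `z_m = 0` for `m < 0`. -/
noncomputable def zInd (m : ℤ) : RAZ :=
  if 0 ≤ m then MvPolynomial.X (Sum.inl (Sum.inr m.toNat)) else 0

/-- The indeterminate `x`. -/
noncomputable def xInd : RAZ := MvPolynomial.X (Sum.inr ())

/-- The exponential AZ matrix `EAZ(a,z)_{nk} = (n!/k!)·(z_{n-k} + k·a_{n-k+1})`,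
with `z_{-1} := 0` and `a_m = z_m = 0` for `m < 0` (so the rows are
finitely supported: the entry vanishes for `k > n+1`). -/
noncomputable def EAZ (a z : ℤ → RAZ) : RFMat RAZ :=
  fun n => ∑ k ∈ Finset.range (n + 2),
    Finsupp.single k
      (((n.factorial : ℚ) / (k.factorial : ℚ)) •
        (z ((n : ℤ) - k) + (k : RAZ) * a ((n : ℤ) - k + 1)))

/-- The `x`-binomial matrix `(B_x)_{ij} = C(i,j)·x^{i-j}` (with `x ↦ t`). -/
noncomputable def BxMat (t : RAZ) : RFMat RAZ :=
  fun n => ∑ j ∈ Finset.range (n + 1),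
    Finsupp.single j ((n.choose j : RAZ) * t ^ (n - j))

/-!
With `D = diag(n!)` and `e_t = exp(tX)`, one has `B_t = D T(e_t) D⁻¹`, and the matrices
`D T(f) D⁻¹` multiply like the power series `f`; in particular they commute and
`B_s B_t = B_{s+t}`. Moreover `Δ D T(f) D⁻¹ = D T(f) D⁻¹ Δ + D T(f') D⁻¹`. Conjugating
`EAZ(a,z) = D T(z) D⁻¹ + D T(a) D⁻¹ Δ` by `B_x` therefore fixes both Toeplitz factors
and only adds `D T(e_{-x} · a · e_x') D⁻¹ = D T(x a) D⁻¹`.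
-/

open Finset Finsupp PowerSeries
open scoped Nat

lemma PowerSeries.derivative_rescale {R : Type*} [CommRing R] (t : R) (f : R⟦X⟧) :
    d⁄dX R (rescale t f) = C t * rescale t (d⁄dX R f) := by
  ext n
  simp only [coeff_derivative, coeff_rescale, coeff_C_mul]
  ring

namespace RFMat

variable {R : Type*} [CommRing R]

noncomputable instance : AddCommGroup (RFMat R) :=
  inferInstanceAs (AddCommGroup (ℕ → ℕ →₀ R))

noncomputable instance : Mul (RFMat R) := ⟨mul⟩

protected lemma add_apply (P Q : RFMat R) (n : ℕ) : (P + Q : RFMat R) n = P n + Q n := rfl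

protected lemma mul_apply (P Q : RFMat R) (n k : ℕ) :
    (P * Q : RFMat R) n k = (P n).sum fun j c => c * Q j k := by
  simp only [HMul.hMul, Mul.mul, mul, Finsupp.sum_apply, Finsupp.smul_apply, smul_eq_mul]

lemma mul_apply_of_eq_sum {P : RFMat R} {n : ℕ} {s : Finset ℕ} {c : ℕ → R}
    (hP : P n = ∑ j ∈ s, single j (c j)) (Q : RFMat R) (k : ℕ) :
    (P * Q : RFMat R) n k = ∑ j ∈ s, c j * Q j k := by
  rw [RFMat.mul_apply, hP,
    ← sum_finsetSum_index (fun _ => zero_mul _) (fun _ _ _ => add_mul _ _ _)]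
  exact Finset.sum_congr rfl fun j _ => sum_single_index (zero_mul _)

protected lemma mul_assoc (P Q S : RFMat R) : P * Q * S = P * (Q * S) := by
  funext n
  change ((P n).sum fun j a => a • Q j).sum (fun k b => b • S k)
      = (P n).sum fun j a => a • ((Q j).sum fun k b => b • S k)
  rw [sum_sum_index (h := fun k b => b • S k) (fun _ => zero_smul R _)
    (fun _ _ _ => add_smul _ _ _)]
  refine Finsupp.sum_congr fun j _ => ?_
  rw [sum_smul_index' (h := fun k b => b • S k) (fun _ => zero_smul R _), Finsupp.smul_sum]
  simp only [smul_eq_mul, mul_smul]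

protected lemma mul_add (P Q S : RFMat R) : P * (Q + S) = P * Q + P * S := by
  funext n
  change ((P n).sum fun j a => a • (Q j + S j)) = _
  simp only [smul_add, Finsupp.sum_add]
  rfl

protected lemma add_mul (P Q S : RFMat R) : (P + Q) * S = P * S + Q * S := by
  funext n
  exact sum_add_index' (h := fun j a => a • S j) (fun _ => zero_smul R _)
    (fun _ _ _ => add_smul _ _ _)

/-- The matrix `Δ` of the paper. -/
noncomputable def shift : RFMat R := fun n => single (n + 1) 1

lemma shift_mul_apply (P : RFMat R) (n : ℕ) : (shift * P : RFMat R) n = P (n + 1) :=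
  (sum_single_index (h := fun j a => a • P j) (zero_smul R _)).trans (one_smul R _)

lemma mul_shift (P : RFMat R) (n : ℕ) : (P * shift : RFMat R) n = mapDomain Nat.succ (P n) := by
  change ((P n).sum fun j a => a • single (j + 1) (1 : R)) = _
  simp only [smul_single_one]
  rfl

lemma mul_shift_apply_zero (P : RFMat R) (n : ℕ) : (P * shift : RFMat R) n 0 = 0 := by
  rw [mul_shift, mapDomain_of_notMem_range]
  simp

lemma mul_shift_apply_succ (P : RFMat R) (n k : ℕ) :
    (P * shift : RFMat R) n (k + 1) = P n k := by
  rw [mul_shift, mapDomain_apply Nat.succ_injective]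

section ExpToeplitz

variable [Algebra ℚ R]

/-- The matrix `D T(f) D⁻¹`, where `D = diag(n!)` and `T(f)` is the lower-triangular Toeplitz
matrix of the coefficients of `f`. -/
noncomputable def expToeplitz (f : R⟦X⟧) : RFMat R :=
  fun n => ∑ k ∈ range (n + 1), single k (((n ! : ℚ) / k !) • coeff (n - k) f)

lemma expToeplitz_apply (f : R⟦X⟧) (n k : ℕ) :
    expToeplitz f n k = if k ≤ n then ((n ! : ℚ) / k !) • coeff (n - k) f else 0 := by
  simp only [expToeplitz, finsetSum_apply, single_apply, Finset.sum_ite_eq', mem_range,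
    Nat.lt_succ_iff]

lemma expToeplitz_add (f g : R⟦X⟧) :
    expToeplitz (f + g) = expToeplitz f + expToeplitz g := by
  funext n; ext k
  simp only [RFMat.add_apply, Finsupp.add_apply, expToeplitz_apply, map_add, smul_add]
  split_ifs <;> simp

lemma expToeplitz_one : expToeplitz (1 : R⟦X⟧) = one := by
  funext n; ext k
  rw [expToeplitz_apply, coeff_one, one, single_apply]
  obtain rfl | hkn := eq_or_ne n k
  · simp [div_self (by positivity : (n ! : ℚ) ≠ 0)]
  · rw [if_neg hkn]
    split_ifs <;> first | omega | simp

lemma expToeplitz_mul (f g : R⟦X⟧) :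
    expToeplitz f * expToeplitz g = expToeplitz (f * g) := by
  funext n; ext k
  rw [mul_apply_of_eq_sum rfl]
  simp only [expToeplitz_apply]
  split_ifs with hkn
  · obtain ⟨m, rfl⟩ := Nat.exists_eq_add_of_le hkn
    rw [show k + m + 1 = k + (m + 1) by ring, sum_range_add, Finset.sum_eq_zero, zero_add,
      Nat.add_sub_cancel_left, mul_comm f, coeff_mul, Nat.sum_antidiagonal_eq_sum_range_succ
        (fun p q => coeff p g * coeff q f), Finset.smul_sum]
    · refine Finset.sum_congr rfl fun q hq => ?_
      rw [mem_range] at hq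
      rw [if_pos (Nat.le_add_right k q), smul_mul_smul_comm,
        div_mul_div_cancel₀ (by positivity), Nat.add_sub_cancel_left,
        show k + m - (k + q) = m - q by omega, mul_comm]
    · intro j hj
      rw [mem_range] at hj
      rw [if_neg (by omega), mul_zero]
  · refine Finset.sum_eq_zero fun j hj => ?_
    rw [mem_range] at hj
    rw [if_neg (by omega), mul_zero]

lemma shift_mul_expToeplitz (f : R⟦X⟧) :
    shift * expToeplitz f = expToeplitz f * shift + expToeplitz (d⁄dX R f) := by
  funext n; ext k
  rw [shift_mul_apply, RFMat.add_apply, Finsupp.add_apply]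
  have hcast : ∀ (m : ℕ) (r : R), r * (m + 1 : R) = ((m + 1 : ℕ) : ℚ) • r := fun m r => by
    rw [Nat.cast_smul_eq_nsmul, nsmul_eq_mul, mul_comm, Nat.cast_succ]
  cases k with
  | zero =>
    simp only [mul_shift_apply_zero, expToeplitz_apply, zero_le, if_true, coeff_derivative,
      Nat.sub_zero, hcast, smul_smul, zero_add]
    congr 1
    push_cast [Nat.factorial_succ]
    ring
  | succ k =>
    simp only [mul_shift_apply_succ, expToeplitz_apply, coeff_derivative, hcast, smul_smul,
      Nat.add_sub_add_right, Nat.add_le_add_iff_right]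
    rcases lt_trichotomy k n with hkn | rfl | hkn
    · obtain ⟨m, rfl⟩ := Nat.exists_eq_add_of_lt hkn
      rw [if_pos hkn.le, if_pos hkn.le, if_pos (by omega),
        show k + m + 1 - (k + 1) + 1 = k + m + 1 - k by omega, ← add_smul]
      congr 1
      rw [show k + m + 1 - k = m + 1 by omega]
      field_simp
      push_cast [Nat.factorial_succ]
      ring
    · simp [div_self (by positivity : ((k + 1)! : ℚ) ≠ 0),
        div_self (by positivity : (k ! : ℚ) ≠ 0)]
    · simp [hkn.not_ge, show ¬ k + 1 ≤ n by omega]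

lemma expToeplitz_conj {u v : R⟦X⟧} (huv : u * v = 1) (f g : R⟦X⟧) :
    expToeplitz u * ((expToeplitz f + expToeplitz g * shift) * expToeplitz v)
      = expToeplitz (f + u * g * d⁄dX R v) + expToeplitz g * shift := by
  have hf : expToeplitz u * (expToeplitz f * expToeplitz v) = expToeplitz f := by
    rw [expToeplitz_mul, expToeplitz_mul]
    congr 1
    linear_combination f * huv
  have hg : expToeplitz u * (expToeplitz g * shift * expToeplitz v)
      = expToeplitz (u * g * d⁄dX R v) + expToeplitz g * shift := by
    rw [RFMat.mul_assoc, shift_mul_expToeplitz, RFMat.mul_add, RFMat.mul_add,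
      ← RFMat.mul_assoc (expToeplitz g), expToeplitz_mul g v, ← RFMat.mul_assoc,
      expToeplitz_mul, expToeplitz_mul, expToeplitz_mul,
      show u * (g * v) = g by linear_combination g * huv, ← mul_assoc u g, add_comm]
  rw [RFMat.add_mul, RFMat.mul_add, hf, hg, expToeplitz_add, add_assoc]

end ExpToeplitz

end RFMat

open RFMat

lemma BxMat_eq_expToeplitz (t : RAZ) : BxMat t = expToeplitz (rescale t (exp RAZ)) := by
  funext n
  refine Finset.sum_congr rfl fun k hk => ?_
  congr 1
  rw [coeff_rescale, coeff_exp, Algebra.smul_def, mul_left_comm, ← map_mul, mul_comm,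
    ← map_natCast (algebraMap ℚ RAZ), Nat.cast_choose ℚ (Nat.lt_succ_iff.1 (mem_range.1 hk))]
  congr 2
  field_simp

lemma BxMat_mul (s t : RAZ) : BxMat s * BxMat t = BxMat (s + t) := by
  rw [BxMat_eq_expToeplitz, BxMat_eq_expToeplitz, BxMat_eq_expToeplitz, expToeplitz_mul,
    exp_mul_exp_eq_exp_add]

lemma BxMat_zero : BxMat 0 = one := by
  rw [BxMat_eq_expToeplitz, rescale_zero_apply, constantCoeff_exp, map_one, expToeplitz_one]

lemma EAZ_apply (a z : ℤ → RAZ) (n k : ℕ) :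
    EAZ a z n k = if k ≤ n + 1 then
      ((n ! : ℚ) / k !) • (z ((n : ℤ) - k) + (k : RAZ) * a ((n : ℤ) - k + 1)) else 0 := by
  simp only [EAZ, finsetSum_apply, single_apply, Finset.sum_ite_eq', mem_range,
    Nat.lt_succ_iff]

lemma EAZ_eq_expToeplitz (a z : ℤ → RAZ) (hz : ∀ m < 0, z m = 0) :
    EAZ a z = expToeplitz (mk fun m => z m) + expToeplitz (mk fun m => a m) * shift := by
  funext n; ext k : 1
  rw [EAZ_apply, RFMat.add_apply, Finsupp.add_apply]
  cases k with
  | zero => simp [mul_shift_apply_zero, expToeplitz_apply]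
  | succ k =>
    rw [mul_shift_apply_succ, expToeplitz_apply, expToeplitz_apply, coeff_mk, coeff_mk]
    have ha (hk : k ≤ n) :
        ((n ! : ℚ) / (k + 1)!) • (((k + 1 : ℕ) : RAZ) * a (n - (k + 1 : ℕ) + 1))
          = ((n ! : ℚ) / k !) • a (n - k : ℕ) := by
      rw [← nsmul_eq_mul, ← Nat.cast_smul_eq_nsmul ℚ, smul_smul, Nat.cast_sub hk]
      congr 1
      · push_cast [Nat.factorial_succ]
        field_simp
      · congr 1
        push_cast
        ring
    rcases lt_trichotomy k n with hkn | rfl | hkn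
    · rw [if_pos (by omega), if_pos (show k + 1 ≤ n from hkn), if_pos hkn.le, smul_add,
        ha hkn.le, Nat.cast_sub (show k + 1 ≤ n from hkn)]
    · rw [if_pos le_rfl, if_neg (by omega), if_pos le_rfl, smul_add, ha le_rfl, zero_add,
        hz _ (by omega), smul_zero, zero_add]
    · rw [if_neg (by omega), if_neg (by omega), if_neg (by omega), add_zero]

/-- In `ℚ[a,z,x]`, the `x`-binomial matrix `B_x` is invertible
with inverse `B_{-x}`, and the exponential AZ matrix satisfies the conjugation
identity `B_x⁻¹ · EAZ(a,z) · B_x = EAZ(a, z + x·a)`. -/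
theorem EAZ_conjugation :
    RFMat.mul (BxMat xInd) (BxMat (-xInd)) = RFMat.one ∧
    RFMat.mul (BxMat (-xInd)) (BxMat xInd) = RFMat.one ∧
    RFMat.mul (BxMat (-xInd)) (RFMat.mul (EAZ aInd zInd) (BxMat xInd))
      = EAZ aInd (fun m => zInd m + xInd * aInd m) := by
  refine ⟨?_, ?_, ?_⟩
  · change BxMat xInd * BxMat (-xInd) = one
    rw [BxMat_mul, add_neg_cancel, BxMat_zero]
  · change BxMat (-xInd) * BxMat xInd = one
    rw [BxMat_mul, neg_add_cancel, BxMat_zero]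
  change BxMat (-xInd) * (EAZ aInd zInd * BxMat xInd) = _
  have hz : ∀ m < 0, zInd m = 0 := fun m hm => by simp [zInd, hm.not_ge]
  have hz' : ∀ m < 0, zInd m + xInd * aInd m = 0 := fun m hm => by simp [zInd, aInd, hm.not_ge]
  have hinv : rescale (-xInd) (exp RAZ) * rescale xInd (exp RAZ) = 1 := by
    rw [exp_mul_exp_eq_exp_add, neg_add_cancel, rescale_zero_apply, constantCoeff_exp, map_one]
  have hderiv : rescale (-xInd) (exp RAZ) * (mk fun m : ℕ => aInd m)
      * d⁄dX RAZ (rescale xInd (exp RAZ)) = C xInd * mk fun m : ℕ => aInd m := by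
    rw [derivative_rescale, derivative_exp]
    linear_combination (C xInd * mk fun m : ℕ => aInd m) * hinv
  have hmk : (mk fun m : ℕ => zInd m + xInd * aInd m)
      = (mk fun m : ℕ => zInd m) + C xInd * mk fun m : ℕ => aInd m := by
    ext m
    simp [coeff_C_mul]
  rw [EAZ_eq_expToeplitz _ _ hz, EAZ_eq_expToeplitz _ _ hz', BxMat_eq_expToeplitz,
    BxMat_eq_expToeplitz, expToeplitz_conj hinv, hderiv, hmk]
end
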